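/- arXiv:1902.08170 — 2 statements merged into one kernel-verified Lean document; each statement's English description precedes it below -/
import Mathlib

section
/- For every real number a, the function h_a(x) := ( x / r_a(x) )·e^{−x} satisfies lim_{x→0⁺} ( h_a(x) − 1 − x log x ) / x = γ + a − 2, where γ is the Euler–Mascheroni constant. (In the paper's notation: h(r̃) = (∂r/∂r̃)(r̃/r)³ = (r̃/r)e^{−r̃} = 1 + r̃ log r̃ + (γ + a − 2) r̃ + o(r̃); this is also the transformed conformal-geodesic initial datum ẋ^τ on past null infinity.) -/
open Real Filter

noncomputable section

/-- `Eineg x = Ei(−x) = −∫_x^∞ e^{−t}/t dt`, the exponential integral. -/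
def Eineg (x : ℝ) : ℝ := -∫ t in Set.Ioi x, Real.exp (-t) / t

/-- `u_a(x) = e^{−x}/x + a + Ei(−x)` for `x > 0`. -/
def u (a x : ℝ) : ℝ := Real.exp (-x) / x + a + Eineg x

/-- `r_a(x) = 1/u_a(x)` (meaningful on intervals where `u_a > 0`). -/
def rga (a x : ℝ) : ℝ := (u a x)⁻¹

/-! For `x > 0` one has `h_a(x) = e^{−2x} + a x e^{−x} + x e^{−x} Ei(−x)`, so the quotient splits as
`(e^{−2x} − 1)/x + a e^{−x} + e^{−x} (Ei(−x) − log x) + (e^{−x} − 1) log x`, with limits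
`−2`, `a`, `γ` and `0`. The only real input is `Ei(−x) − log x → γ`: integrating by parts,
`Ei(−x) = e^{−x} log x − ∫_x^∞ log t e^{−t} dt`, and `∫_0^∞ log t e^{−t} dt = Γ'(1) = −γ`. -/

open MeasureTheory Set Topology

lemma integrableOn_log_mul_exp_neg :
    IntegrableOn (fun t ↦ log t * exp (-t)) (Ioi 0) := by
  have hexp : Continuous fun t : ℝ ↦ exp (-t) := by fun_prop
  rw [← Ioc_union_Ioi_eq_Ioi zero_le_one, integrableOn_union]
  constructor
  · have := (intervalIntegral.intervalIntegrable_log' (a := 0) (b := 1)).mul_continuousOn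
      hexp.continuousOn
    rwa [intervalIntegrable_iff_integrableOn_Ioc_of_le zero_le_one] at this
  · refine ((GammaIntegral_convergent two_pos).mono_set (Ioi_subset_Ioi zero_le_one)).mono' ?_ ?_
    · exact (continuousOn_log.mono fun t (ht : 1 < t) ↦ (zero_lt_one.trans ht).ne').mul
        hexp.continuousOn |>.aestronglyMeasurable measurableSet_Ioi
    · filter_upwards [ae_restrict_mem measurableSet_Ioi] with t (ht : 1 < t)
      rw [norm_mul, norm_of_nonneg (log_nonneg ht.le), norm_of_nonneg (exp_pos _).le,
        show (2 : ℝ) - 1 = 1 by norm_num, rpow_one, mul_comm]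
      gcongr
      linarith [log_le_sub_one_of_pos (zero_lt_one.trans ht)]

lemma integral_log_mul_exp_neg :
    ∫ t in Ioi 0, log t * exp (-t) = -eulerMascheroniConstant := by
  have hΓ : Complex.Gamma =ᶠ[𝓝 1] Complex.GammaIntegral := by
    filter_upwards [(isOpen_lt continuous_const Complex.continuous_re).mem_nhds
      (by norm_num : (0 : ℝ) < (1 : ℂ).re)] with s hs using Complex.Gamma_eq_integral hs
  have key := (Complex.hasDerivAt_GammaIntegral (by norm_num)).congr_of_eventuallyEq hΓ
    |>.unique Complex.hasDerivAt_Gamma_one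
  simp only [sub_self, Complex.cpow_zero, one_mul, ← Complex.ofReal_mul] at key
  exact_mod_cast key

lemma integrableOn_exp_neg_div {x : ℝ} (hx : 0 < x) :
    IntegrableOn (fun t ↦ exp (-t) / t) (Ioi x) := by
  refine ((exp_neg_integrableOn_Ioi x one_pos).const_mul x⁻¹).mono' ?_ ?_
  · exact ((continuous_exp.comp continuous_neg).continuousOn.div continuousOn_id
      fun t (ht : x < t) ↦ (hx.trans ht).ne').aestronglyMeasurable measurableSet_Ioi
  · filter_upwards [ae_restrict_mem measurableSet_Ioi] with t (ht : x < t)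
    rw [norm_of_nonneg (div_nonneg (exp_pos _).le (hx.trans ht).le), neg_one_mul, div_eq_inv_mul]
    gcongr

lemma tendsto_exp_neg_mul_log_atTop : Tendsto (fun t ↦ exp (-t) * log t) atTop (𝓝 0) := by
  refine squeeze_zero' ?_ ?_ (by simpa using tendsto_pow_mul_exp_neg_atTop_nhds_zero 1)
  · filter_upwards [eventually_ge_atTop 1] with t ht using
      mul_nonneg (exp_pos _).le (log_nonneg ht)
  · filter_upwards [eventually_gt_atTop 0] with t ht
    rw [mul_comm]
    gcongr
    linarith [log_le_sub_one_of_pos ht]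

lemma Eineg_eq_exp_neg_mul_log_sub_integral {x : ℝ} (hx : 0 < x) :
    Eineg x = exp (-x) * log x - ∫ t in Ioi x, log t * exp (-t) := by
  have hlog : IntegrableOn (fun t ↦ log t * exp (-t)) (Ioi x) :=
    integrableOn_log_mul_exp_neg.mono_set (Ioi_subset_Ioi hx.le)
  have hderiv (t : ℝ) (ht : t ∈ Ioi x) : HasDerivAt (fun t ↦ exp (-t) * log t)
      (exp (-t) / t - log t * exp (-t)) t :=
    ((hasDerivAt_neg t).exp.mul (hasDerivAt_log (hx.trans ht).ne')).congr_deriv (by ring)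
  have hftc := integral_Ioi_of_hasDerivAt_of_tendsto
    (f := fun t ↦ exp (-t) * log t)
    ((continuous_exp.comp continuous_neg).continuousAt.mul
      (continuousAt_log hx.ne')).continuousWithinAt
    hderiv ((integrableOn_exp_neg_div hx).sub hlog) tendsto_exp_neg_mul_log_atTop
  rw [integral_sub (integrableOn_exp_neg_div hx) hlog] at hftc
  rw [Eineg]
  linarith

lemma tendsto_exp_mul_sub_one_div (c : ℝ) :
    Tendsto (fun x ↦ (exp (c * x) - 1) / x) (𝓝[>] 0) (𝓝 c) := by
  simpa [div_eq_inv_mul] using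
    ((hasDerivAt_id (0 : ℝ)).const_mul c).exp.tendsto_slope_zero_right

lemma tendsto_exp_neg_sub_one_mul_log :
    Tendsto (fun x ↦ (exp (-x) - 1) * log x) (𝓝[>] 0) (𝓝 0) := by
  have hxlog : Tendsto (fun x ↦ x * log x) (𝓝[>] 0) (𝓝 0) := by
    simpa using continuous_mul_log.continuousAt.tendsto.mono_left (nhdsWithin_le_nhds (a := 0))
  have hprod := (tendsto_exp_mul_sub_one_div (-1)).mul hxlog
  rw [mul_zero] at hprod
  refine hprod.congr' ?_
  filter_upwards [self_mem_nhdsWithin] with x (hx : 0 < x)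
  rw [neg_one_mul]
  field_simp

lemma tendsto_Eineg_sub_log :
    Tendsto (fun x ↦ Eineg x - log x) (𝓝[>] 0) (𝓝 eulerMascheroniConstant) := by
  have htail : Tendsto (fun x ↦ ∫ t in Ioi x, log t * exp (-t)) (𝓝[>] 0)
      (𝓝 (-eulerMascheroniConstant)) := by
    rw [← integral_log_mul_exp_neg]
    exact integrableOn_log_mul_exp_neg.continuousWithinAt_Ici_primitive_Ioi.mono_left
      (nhdsWithin_mono _ Ioi_subset_Ici_self)
  have hdiff := tendsto_exp_neg_sub_one_mul_log.sub htail
  rw [zero_sub, neg_neg] at hdiff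
  refine hdiff.congr' ?_
  filter_upwards [self_mem_nhdsWithin] with x (hx : 0 < x)
  rw [Eineg_eq_exp_neg_mul_log_sub_integral hx]
  ring

/-- For every real `a`, the function `h_a(x) = (x/r_a(x)) e^{−x}` satisfies
`lim_{x→0⁺} (h_a(x) − 1 − x log x)/x = γ + a − 2`. -/
theorem stmt_8 (a : ℝ) :
    Filter.Tendsto
      (fun x => ((x / rga a x) * Real.exp (-x) - 1 - x * Real.log x) / x)
      (nhdsWithin 0 (Set.Ioi 0))
      (nhds (Real.eulerMascheroniConstant + a - 2)) := by
  have hexp : Tendsto (fun x ↦ exp (-x)) (𝓝[>] 0) (𝓝 1) :=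
    ((continuous_exp.comp continuous_neg).tendsto' 0 1 (by simp)).mono_left nhdsWithin_le_nhds
  have hsum := (((tendsto_exp_mul_sub_one_div (-2)).add (hexp.const_mul a)).add
    (hexp.mul tendsto_Eineg_sub_log)).add tendsto_exp_neg_sub_one_mul_log
  rw [show eulerMascheroniConstant + a - 2 = -2 + a * 1 + 1 * eulerMascheroniConstant + 0 by ring]
  refine hsum.congr' ?_
  filter_upwards [self_mem_nhdsWithin] with x (hx : 0 < x)
  rw [rga, u, div_inv_eq_mul, show -2 * x = -x + -x by ring, exp_add]
  field_simp
  ring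
end
end

section
/- For every real number a there exists δ > 0 such that the function x ↦ ( (r_a(x)/2)·( x/r_a(x) − r_a(x)/x )·e^{−x} − x² log x ) / x² is bounded on (0,δ). (In the paper's notation: the transformed conformal-geodesic initial datum satisfies ẋ^r|_{scri⁻} = r̃² log r̃ + O(r̃²) as r̃ → 0⁺.) -/
/-!
As `x → 0⁺`, `Ei(−x) = log x + O(1)`: split the integral at `1` and subtract `1/t` on
`(x, 1)`. Hence `w := x u_a(x) = 1 + x (log x + σ)` with `σ` bounded, so `w → 1` and
`r_a = x / w`. Writing also `e^{−x} = 1 + x q` with `q → −1`, the remainder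
`(ẋ^r − x² log x) / x²` is a rational expression in `x, log x, q, w, σ` that splits as
`T₁ + σ T₂`, where `T₁` involves only `x log x · q` and `x log² x` (both `→ 0`) and `T₂ → 1`.
-/

open Real Filter

noncomputable section

open MeasureTheory Set Asymptotics Topology Interval

lemma integrableOn_exp_neg_div_Ioi {x : ℝ} (hx : 0 < x) :
    IntegrableOn (fun t => exp (-t) / t) (Ioi x) := by
  have hexp : IntegrableOn (fun t => exp (-t)) (Ioi x) := by
    simpa using exp_neg_integrableOn_Ioi x one_pos
  refine (hexp.mul_const x⁻¹).mono' ?_ ?_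
  · have : ContinuousOn (fun t => exp (-t) / t) (Ioi x) :=
      (by fun_prop : Continuous fun t => exp (-t)).continuousOn.div continuousOn_id
        fun t ht => (hx.trans ht).ne'
    exact this.aestronglyMeasurable measurableSet_Ioi
  · filter_upwards [ae_restrict_mem measurableSet_Ioi] with t ht
    rw [norm_of_nonneg (div_nonneg (exp_pos _).le (hx.trans ht).le), div_eq_mul_inv]
    exact mul_le_mul_of_nonneg_left (inv_anti₀ hx (le_of_lt ht)) (exp_pos _).le

lemma abs_exp_neg_sub_one_le {t : ℝ} (ht : 0 ≤ t) : |exp (-t) - 1| ≤ t := by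
  rw [abs_sub_comm, abs_of_nonneg (sub_nonneg.2 (exp_le_one_iff.2 (by linarith)))]
  linarith [add_one_le_exp (-t)]

lemma abs_intervalIntegral_exp_neg_sub_one_div_le {x : ℝ} (hx : 0 < x) (hx1 : x ≤ 1) :
    |∫ t in x..1, (exp (-t) - 1) / t| ≤ 1 := by
  calc |∫ t in x..1, (exp (-t) - 1) / t| ≤ 1 * |1 - x| := by
        refine intervalIntegral.norm_integral_le_of_norm_le_const
          (f := fun t => (exp (-t) - 1) / t) fun t ht => ?_
        rw [uIoc_of_le hx1] at ht
        have ht0 : 0 < t := hx.trans ht.1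
        rw [norm_div, norm_of_nonneg ht0.le, div_le_one ht0]
        exact abs_exp_neg_sub_one_le ht0.le
    _ ≤ 1 := by rw [one_mul, abs_of_nonneg (by linarith)]; linarith

lemma abs_integral_exp_neg_div_Ioi_one_le : |∫ t in Ioi 1, exp (-t) / t| ≤ 1 := by
  have hle : ∫ t in Ioi 1, exp (-t) / t ≤ ∫ t in Ioi 1, exp (-t) :=
    setIntegral_mono_on (integrableOn_exp_neg_div_Ioi one_pos)
      (by simpa using exp_neg_integrableOn_Ioi 1 one_pos) measurableSet_Ioi fun t ht =>
        div_le_self (exp_pos _).le (le_of_lt ht)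
  rw [abs_of_nonneg (setIntegral_nonneg measurableSet_Ioi fun t ht =>
    div_nonneg (exp_pos _).le (one_pos.trans ht).le)]
  exact hle.trans ((integral_exp_neg_Ioi 1).le.trans (exp_le_one_iff.2 (by norm_num)))

lemma eineg_sub_log_eq {x : ℝ} (hx : 0 < x) (hx1 : x ≤ 1) :
    Eineg x - log x = -(∫ t in x..1, (exp (-t) - 1) / t) - ∫ t in Ioi 1, exp (-t) / t := by
  have hfi := integrableOn_exp_neg_div_Ioi hx
  have hsplit : ∫ t in Ioi x, exp (-t) / t
      = (∫ t in x..1, exp (-t) / t) + ∫ t in Ioi 1, exp (-t) / t := by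
    rw [intervalIntegral.integral_of_le hx1, ← setIntegral_union (Ioc_disjoint_Ioi le_rfl)
      measurableSet_Ioi (hfi.mono_set Ioc_subset_Ioi_self) (hfi.mono_set (Ioi_subset_Ioi hx1)),
      Ioc_union_Ioi_eq_Ioi hx1]
  have hne : (0:ℝ) ∉ [[x, 1]] := by rw [uIcc_of_le hx1]; exact fun h => hx.not_ge h.1
  have hinv : IntervalIntegrable (fun t => 1 / t) volume x 1 :=
    intervalIntegral.intervalIntegrable_one_div (fun _ ht => ne_of_mem_of_not_mem ht hne)
      continuousOn_id
  have hrest : ∫ t in x..1, exp (-t) / t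
      = (∫ t in x..1, 1 / t) + ∫ t in x..1, (exp (-t) - 1) / t := by
    rw [← intervalIntegral.integral_add hinv]
    · exact intervalIntegral.integral_congr fun t ht => by
        have : t ≠ 0 := ne_of_mem_of_not_mem ht hne
        field_simp; ring
    · exact ((by fun_prop : Continuous fun t => exp (-t) - 1).continuousOn.div continuousOn_id
        fun _ ht => ne_of_mem_of_not_mem ht hne).intervalIntegrable
  rw [Eineg, hsplit, hrest, integral_one_div hne, one_div, log_inv]
  ring

lemma abs_eineg_sub_log_le {x : ℝ} (hx : 0 < x) (hx1 : x ≤ 1) : |Eineg x - log x| ≤ 2 := by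
  rw [eineg_sub_log_eq hx hx1]
  calc _ ≤ |-(∫ t in x..1, (exp (-t) - 1) / t)| + |∫ t in Ioi 1, exp (-t) / t| := abs_sub _ _
    _ ≤ 1 + 1 := by
        rw [abs_neg]
        exact add_le_add (abs_intervalIntegral_exp_neg_sub_one_div_le hx hx1)
          abs_integral_exp_neg_div_Ioi_one_le
    _ = 2 := by norm_num

lemma isBigO_eineg_sub_log : (fun x => Eineg x - log x) =O[𝓝[>] 0] (fun _ => (1:ℝ)) := by
  refine IsBigO.of_bound 2 ?_
  filter_upwards [Ioo_mem_nhdsGT one_pos] with x hx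
  simpa using abs_eineg_sub_log_le hx.1 hx.2.le

lemma tendsto_exp_neg_sub_one_div :
    Tendsto (fun x => (exp (-x) - 1) / x) (𝓝[≠] 0) (𝓝 (-1)) := by
  simpa [div_eq_inv_mul] using ((hasDerivAt_id (0:ℝ)).neg.exp).tendsto_slope_zero

lemma tendsto_mul_log_nhdsGT_zero : Tendsto (fun x => x * log x) (𝓝[>] 0) (𝓝 0) := by
  simpa using (continuous_mul_log.tendsto 0).mono_left nhdsWithin_le_nhds

lemma tendsto_mul_log_sq_nhdsGT_zero : Tendsto (fun x => x * log x ^ 2) (𝓝[>] 0) (𝓝 0) := by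
  have h : Tendsto (fun x => 4 * (√x * log √x) ^ 2) (𝓝[>] 0) (𝓝 0) := by
    simpa using ((((continuous_mul_log.comp continuous_sqrt).tendsto 0).pow 2).const_mul
      4).mono_left nhdsWithin_le_nhds
  refine h.congr' ?_
  filter_upwards [self_mem_nhdsWithin] with x (hx : 0 < x)
  rw [log_sqrt hx.le, mul_pow, sq_sqrt hx.le]
  ring

lemma u_sub_inv_sub_log_eq (a : ℝ) {x : ℝ} (hx : x ≠ 0) :
    u a x - x⁻¹ - log x = (exp (-x) - 1) / x + a + (Eineg x - log x) := by
  rw [u]; field_simp; ring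

lemma isBigO_u_sub_inv_sub_log (a : ℝ) :
    (fun x => u a x - x⁻¹ - log x) =O[𝓝[>] 0] (fun _ => (1:ℝ)) := by
  have hq := (tendsto_exp_neg_sub_one_div.mono_left (nhdsGT_le_nhdsNE 0)).isBigO_one ℝ
  refine ((hq.add (isBigO_const_const a one_ne_zero _)).add isBigO_eineg_sub_log).congr' ?_
    EventuallyEq.rfl
  filter_upwards [self_mem_nhdsWithin] with x (hx : 0 < x)
  exact (u_sub_inv_sub_log_eq a hx.ne').symm

lemma tendsto_mul_u (a : ℝ) : Tendsto (fun x => x * u a x) (𝓝[>] 0) (𝓝 1) := by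
  have hxσ : Tendsto (fun x => x * (u a x - x⁻¹ - log x)) (𝓝[>] 0) (𝓝 0) :=
    (tendsto_nhdsWithin_of_tendsto_nhds tendsto_id).zero_mul_isBoundedUnder_le
      ((isBigO_one_iff ℝ).1 (isBigO_u_sub_inv_sub_log a))
  refine ((hxσ.add tendsto_mul_log_nhdsGT_zero).const_add 1).congr' ?_ |>.trans_eq (by norm_num)
  filter_upwards [self_mem_nhdsWithin] with x (hx : 0 < x)
  field_simp
  ring

/-- With `w = 1 + x (L + σ)` and `e = 1 + x q`, the numerator `e (w² − 1) − 2 w² x L` equals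
`x L [(e − 1)(w + 1) − (w − 1)(2w + 1)] + x σ e (w + 1)`. -/
lemma xdot_remainder_eq {x e L w : ℝ} (hx : x ≠ 0) (hw : w ≠ 0) :
    ((x / w / 2) * (x / (x / w) - x / w / x) * e - x ^ 2 * L) / x ^ 2
      = (x * L * ((e - 1) / x) * (w + 1) - x * L ^ 2 * (2 * w + 1)) / (2 * w ^ 2)
        + ((w - 1) / x - L) * ((e * (w + 1) - x * L * (2 * w + 1)) / (2 * w ^ 2)) := by
  field_simp
  ring

/-- The paper's `ẋ^r|_{scri⁻}`, as a function of `r̃ = x`. -/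
def xdotR (a x : ℝ) : ℝ := (rga a x / 2) * (x / rga a x - rga a x / x) * exp (-x)

theorem isBigO_xdotR_sub_sq_mul_log_div_sq (a : ℝ) :
    (fun x => (xdotR a x - x ^ 2 * log x) / x ^ 2) =O[𝓝[>] 0] (fun _ => (1:ℝ)) := by
  set w := fun x => x * u a x
  have hw : Tendsto w (𝓝[>] 0) (𝓝 1) := tendsto_mul_u a
  have he : Tendsto (fun x => exp (-x)) (𝓝[>] 0) (𝓝 1) := by
    simpa using ((by fun_prop : Continuous fun x => exp (-x)).tendsto 0).mono_left
      nhdsWithin_le_nhds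
  have hq := tendsto_exp_neg_sub_one_div.mono_left (nhdsGT_le_nhdsNE 0)
  have hT1 : Tendsto (fun x => (x * log x * ((exp (-x) - 1) / x) * (w x + 1)
      - x * log x ^ 2 * (2 * w x + 1)) / (2 * w x ^ 2)) (𝓝[>] 0) (𝓝 0) := by
    convert (((tendsto_mul_log_nhdsGT_zero.mul hq).mul (hw.add_const 1)).sub
      (tendsto_mul_log_sq_nhdsGT_zero.mul ((hw.const_mul 2).add_const 1))).div
      ((hw.pow 2).const_mul 2) (by norm_num) using 2 <;> norm_num
  have hT2 : Tendsto (fun x => (exp (-x) * (w x + 1) - x * log x * (2 * w x + 1)) / (2 * w x ^ 2))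
      (𝓝[>] 0) (𝓝 1) := by
    convert ((he.mul (hw.add_const 1)).sub (tendsto_mul_log_nhdsGT_zero.mul
      ((hw.const_mul 2).add_const 1))).div ((hw.pow 2).const_mul 2) (by norm_num) using 2
      <;> norm_num
  have hσT2 := ((isBigO_u_sub_inv_sub_log a).mul (hT2.isBigO_one ℝ)).congr_right
    fun _ => mul_one 1
  refine ((hT1.isBigO_one ℝ).add hσT2).congr' ?_ EventuallyEq.rfl
  filter_upwards [self_mem_nhdsWithin, hw.eventually_ne one_ne_zero] with x (hx : 0 < x) hwx
  have hu : rga a x = x / w x := by simp only [w, rga]; field_simp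
  rw [xdotR, hu, xdot_remainder_eq hx.ne' hwx]
  congr 2
  simp only [w]; field_simp

lemma exists_bound_Ioo_of_isBigO_one {c : ℝ} {f : ℝ → ℝ}
    (h : f =O[𝓝[>] c] (fun _ => (1:ℝ))) :
    ∃ b > c, ∃ C : ℝ, ∀ x ∈ Ioo c b, |f x| ≤ C := by
  obtain ⟨C, hC⟩ := h.bound
  obtain ⟨b, hcb, hbC⟩ := (nhdsGT_basis c).eventually_iff.1 hC
  exact ⟨b, hcb, C, fun x hx => by simpa using hbC hx⟩

/-- For every real `a`, the transformed conformal-geodesic initial datum satisfies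
`ẋ^r|_{scri⁻} = (r_a/2)(x/r_a − r_a/x)e^{−x} = x² log x + O(x²)` as `x → 0⁺`. -/
theorem stmt_9 (a : ℝ) :
    ∃ δ > (0:ℝ), ∃ C : ℝ, ∀ x ∈ Set.Ioo (0:ℝ) δ,
      |((rga a x / 2) * (x / rga a x - rga a x / x) * Real.exp (-x)
          - x^2 * Real.log x) / x^2| ≤ C :=
  exists_bound_Ioo_of_isBigO_one (isBigO_xdotR_sub_sq_mul_log_div_sq a)
end
end
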